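/- Let R be an associative ring that decomposes as a sum R = A + B of two Lie nilpotent subrings A and B (the sum being as additive subgroups). If at least one of A, B is a one-sided (left or right) ideal of R, then R is Lie solvable. -/

import Mathlib

/-- `I` is a right ideal of `R` (as an additive subgroup closed under right multiplication). -/
def IsRightIdealSG {R : Type*} [Ring R] (I : AddSubgroup R) : Prop :=
  ∀ i ∈ I, ∀ r : R, i * r ∈ I

/-- `I` is a left ideal of `R`. -/
def IsLeftIdealSG {R : Type*} [Ring R] (I : AddSubgroup R) : Prop :=
  ∀ i ∈ I, ∀ r : R, r * i ∈ I

/-- `I` is a two-sided ideal of `R`. -/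
def IsIdealSG {R : Type*} [Ring R] (I : AddSubgroup R) : Prop :=
  IsLeftIdealSG I ∧ IsRightIdealSG I

/-- Left-normed iterated commutator: `itComm s n = [[...[s 0, s 1],...], s n]`
(a left-normed commutator of `n + 1` elements). -/
def itComm {R : Type*} [Ring R] (s : ℕ → R) : ℕ → R
  | 0 => s 0
  | n + 1 => itComm s n * s (n + 1) - s (n + 1) * itComm s n

/-- `S` is Lie nilpotent of class ≤ m : every left-normed commutator of `m + 1`
elements of `S` vanishes. -/
def LieNilpotentClassLe {R : Type*} [Ring R] (S : Set R) (m : ℕ) : Prop :=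
  ∀ s : ℕ → R, (∀ n, s n ∈ S) → itComm s m = 0

/-- The Lie derived series of an additive subgroup `S` of a ring:
`D 0 = S`, `D (k+1)` = additive span of `[D k, D k]`. -/
def derSeries {R : Type*} [Ring R] (S : AddSubgroup R) : ℕ → AddSubgroup R
  | 0 => S
  | n + 1 => AddSubgroup.closure
      {x | ∃ a ∈ derSeries S n, ∃ b ∈ derSeries S n, x = a * b - b * a}

/-- `R^(−)_n`: the additive subgroup generated by all left-normed commutators of
`n` elements of `R`. -/
def lcs (R : Type*) [Ring R] (n : ℕ) : AddSubgroup R :=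
  AddSubgroup.closure {x | ∃ s : ℕ → R, x = itComm s (n - 1)}

/-- `R_n = R^(−)_n + R^(−)_n · R`, a two-sided ideal of `R`. -/
def Rn (R : Type*) [Ring R] (n : ℕ) : AddSubgroup R :=
  lcs R n ⊔ AddSubgroup.closure {x | ∃ c ∈ lcs R n, ∃ r : R, x = c * r}

/-- The additive span of `k`-fold products of elements of `S`. -/
def spanPow {R : Type*} [Ring R] (S : Set R) (k : ℕ) : AddSubgroup R :=
  AddSubgroup.closure {x | ∃ l : List R, l.length = k ∧ (∀ a ∈ l, a ∈ S) ∧ x = l.prod}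

/-- `J` is nilpotent: all `k`-fold products of its elements vanish for some `k > 0`. -/
def IsNilpotentSG {R : Type*} [Ring R] (J : AddSubgroup R) : Prop :=
  ∃ k : ℕ, 0 < k ∧ ∀ l : List R, l.length = k → (∀ a ∈ l, a ∈ J) → l.prod = 0

/-- `R` is semiprime: it has no nonzero nilpotent two-sided ideals. -/
def IsSemiprimeRing (R : Type*) [Ring R] : Prop :=
  ∀ J : AddSubgroup R, IsIdealSG J → IsNilpotentSG J → J = ⊥

/-! Write `Λ k` for the lower central series of `B` and `I k` for the ideal it generates.
Modulo `I 0` the ring is the image of `A`, which is Lie solvable, so the derived series of `R`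
enters `I 0`. If `B` is a left ideal, then `I k ⊆ B + K k`, where `K k` is the ideal generated
by `[Λ k, R]`, and `K k * K k ⊆ I (k + 1)` because `[z, a] b = [z, a b] - a [z, b]` with
`a b ∈ B` for `b ∈ B`. As `B` is Lie solvable, finitely many further derived steps lead from
`I k` into `I (k + 1)`, and `Λ n = 0` ends the descent. A right ideal is a left ideal of the
opposite ring. -/

section

open AddSubgroup

variable {R : Type*} [Ring R]

theorem AddSubgroup.mul_mem_left_of_mem_closure {P : Set R} {J : AddSubgroup R} {x : R}
    (r : R) (h : ∀ p ∈ P, r * p ∈ J) (hx : x ∈ closure P) : r * x ∈ J := by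
  induction hx using closure_induction with
  | mem p hp => exact h p hp
  | zero => simp
  | add x y _ _ hx hy => simpa only [mul_add] using add_mem hx hy
  | neg x _ hx => simpa only [mul_neg] using neg_mem hx

theorem AddSubgroup.mul_mem_right_of_mem_closure {P : Set R} {J : AddSubgroup R} {x : R}
    (r : R) (h : ∀ p ∈ P, p * r ∈ J) (hx : x ∈ closure P) : x * r ∈ J := by
  induction hx using closure_induction with
  | mem p hp => exact h p hp
  | zero => simp
  | add x y _ _ hx hy => simpa only [add_mul] using add_mem hx hy
  | neg x _ hx => simpa only [neg_mul] using neg_mem hx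

theorem AddSubgroup.mul_mem_of_mem_closure {P Q : Set R} {J : AddSubgroup R} {x y : R}
    (hx : x ∈ closure P) (hy : y ∈ closure Q) (h : ∀ p ∈ P, ∀ q ∈ Q, p * q ∈ J) :
    x * y ∈ J :=
  mul_mem_right_of_mem_closure y
    (fun p hp => mul_mem_left_of_mem_closure p (h p hp) hy) hx

theorem IsIdealSG.sup {I J : AddSubgroup R} (hI : IsIdealSG I) (hJ : IsIdealSG J) :
    IsIdealSG (I ⊔ J) := by
  constructor
  · intro x hx r
    obtain ⟨i, hi, j, hj, rfl⟩ := mem_sup.1 hx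
    rw [mul_add]
    exact add_mem (mem_sup_left (hI.1 i hi r)) (mem_sup_right (hJ.1 j hj r))
  · intro x hx r
    obtain ⟨i, hi, j, hj, rfl⟩ := mem_sup.1 hx
    rw [add_mul]
    exact add_mem (mem_sup_left (hI.2 i hi r)) (mem_sup_right (hJ.2 j hj r))

def idealSpan (S : Set R) : AddSubgroup R :=
  closure {x | ∃ u, ∃ s ∈ S, ∃ v, x = u * s * v}

theorem mul_mem_idealSpan {S : Set R} {s : R} (hs : s ∈ S) (u v : R) :
    u * s * v ∈ idealSpan S :=
  subset_closure ⟨u, s, hs, v, rfl⟩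

theorem subset_idealSpan {S : Set R} : S ⊆ idealSpan S := fun s hs => by
  simpa using mul_mem_idealSpan hs 1 1

theorem isIdealSG_idealSpan (S : Set R) : IsIdealSG (idealSpan S) := by
  constructor
  · intro x hx r
    refine mul_mem_left_of_mem_closure r ?_ hx
    rintro _ ⟨u, s, hs, v, rfl⟩
    simpa only [mul_assoc] using mul_mem_idealSpan hs (r * u) v
  · intro x hx r
    refine mul_mem_right_of_mem_closure r ?_ hx
    rintro _ ⟨u, s, hs, v, rfl⟩
    simpa only [mul_assoc] using mul_mem_idealSpan hs u (v * r)

theorem idealSpan_le {S : Set R} {J : AddSubgroup R} (hJ : IsIdealSG J) (hS : S ⊆ J) :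
    idealSpan S ≤ J := by
  refine (closure_le _).2 ?_
  rintro _ ⟨u, s, hs, v, rfl⟩
  exact hJ.2 _ (hJ.1 s (hS hs) u) v

theorem idealSpan_zero : idealSpan ({0} : Set R) = ⊥ := by
  refine le_bot_iff.1 (idealSpan_le (J := ⊥) ⟨?_, ?_⟩ (by simp)) <;>
    · intro x hx r
      simp [(mem_bot).1 hx]

theorem itComm_congr {s t : ℕ → R} {k : ℕ} (h : ∀ i ≤ k, s i = t i) :
    itComm s k = itComm t k := by
  induction k with
  | zero => exact h 0 le_rfl
  | succ k ih =>
    simp only [itComm, ih fun i hi => h i (Nat.le_succ_of_le hi), h (k + 1) le_rfl]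

def lowerCentral (S : AddSubgroup R) : ℕ → AddSubgroup R
  | 0 => S
  | k + 1 => closure {x | ∃ g ∈ lowerCentral S k, ∃ b ∈ S, x = g * b - b * g}

theorem commutator_mem_lowerCentral_succ {S : AddSubgroup R} {k : ℕ} {g b : R}
    (hg : g ∈ lowerCentral S k) (hb : b ∈ S) : g * b - b * g ∈ lowerCentral S (k + 1) :=
  subset_closure ⟨g, hg, b, hb, rfl⟩

section LieClosed

variable {S : AddSubgroup R} (hS : ∀ a ∈ S, ∀ b ∈ S, a * b - b * a ∈ S)
include hS

theorem lowerCentral_le (k : ℕ) : lowerCentral S k ≤ S := by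
  induction k with
  | zero => exact le_rfl
  | succ k ih =>
    refine (closure_le _).2 ?_
    rintro _ ⟨g, hg, b, hb, rfl⟩
    exact hS g (ih hg) b hb

theorem derSeries_le_lowerCentral (k : ℕ) : derSeries S k ≤ lowerCentral S k := by
  induction k with
  | zero => exact le_rfl
  | succ k ih =>
    refine (closure_le _).2 ?_
    rintro _ ⟨a, ha, b, hb, rfl⟩
    exact commutator_mem_lowerCentral_succ (ih ha) (lowerCentral_le hS k (ih hb))

end LieClosed

theorem lowerCentral_le_closure_itComm (S : AddSubgroup R) (k : ℕ) :
    lowerCentral S k ≤ closure {x | ∃ s : ℕ → R, (∀ i, s i ∈ S) ∧ x = itComm s k} := by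
  induction k with
  | zero => exact fun x hx => subset_closure ⟨fun _ => x, fun _ => hx, rfl⟩
  | succ k ih =>
    refine (closure_le _).2 ?_
    rintro _ ⟨g, hg, b, hb, rfl⟩
    have hcomm : ∀ x ∈ closure {x | ∃ s : ℕ → R, (∀ i, s i ∈ S) ∧ x = itComm s k},
        x * b - b * x ∈ closure {x | ∃ s : ℕ → R, (∀ i, s i ∈ S) ∧ x = itComm s (k + 1)} := by
      intro x hx
      induction hx using closure_induction with
      | mem _ hx =>
        obtain ⟨s, hs, rfl⟩ := hx
        refine subset_closure ⟨Function.update s (k + 1) b, ?_, ?_⟩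
        · intro i
          rcases eq_or_ne i (k + 1) with rfl | hi
          · simpa using hb
          · simpa [hi] using hs i
        · have hk : itComm (Function.update s (k + 1) b) k = itComm s k :=
            itComm_congr fun i hi => Function.update_of_ne (by omega) _ _
          rw [itComm, hk, Function.update_self]
      | zero => simp
      | add x y _ _ hx hy => simpa only [add_mul, mul_add, add_sub_add_comm] using add_mem hx hy
      | neg x _ hx => simpa only [neg_mul, mul_neg, neg_sub_neg, neg_sub] using neg_mem hx
    exact hcomm g (ih hg)

theorem lowerCentral_eq_bot {S : AddSubgroup R} {c : ℕ}
    (hS : LieNilpotentClassLe (S : Set R) c) : lowerCentral S c = ⊥ := by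
  refine le_bot_iff.1 ((lowerCentral_le_closure_itComm S c).trans ((closure_le _).2 ?_))
  rintro _ ⟨s, hs, rfl⟩
  simp [hS s hs]

theorem derSeries_eq_bot_of_lieNilpotentClassLe {S : AddSubgroup R} {c : ℕ}
    (hS : ∀ a ∈ S, ∀ b ∈ S, a * b - b * a ∈ S) (hc : LieNilpotentClassLe (S : Set R) c) :
    derSeries S c = ⊥ :=
  le_bot_iff.1 (lowerCentral_eq_bot hc ▸ derSeries_le_lowerCentral hS c)

theorem derSeries_mono {S T : AddSubgroup R} (h : S ≤ T) (k : ℕ) :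
    derSeries S k ≤ derSeries T k := by
  induction k with
  | zero => exact h
  | succ k ih =>
    refine (closure_le _).2 ?_
    rintro _ ⟨a, ha, b, hb, rfl⟩
    exact subset_closure ⟨a, ih ha, b, ih hb, rfl⟩

theorem derSeries_add (S : AddSubgroup R) (k j : ℕ) :
    derSeries S (k + j) = derSeries (derSeries S k) j := by
  induction j with
  | zero => rfl
  | succ j ih =>
    show derSeries S (k + j + 1) = _
    simp only [derSeries, ih]

theorem derSeries_sup_le (P : AddSubgroup R) {J : AddSubgroup R} (hJ : IsIdealSG J) (k : ℕ) :
    derSeries (P ⊔ J) k ≤ derSeries P k ⊔ J := by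
  induction k with
  | zero => exact le_rfl
  | succ k ih =>
    refine (closure_le _).2 ?_
    rintro _ ⟨x, hx, y, hy, rfl⟩
    obtain ⟨p, hp, i, hi, rfl⟩ := mem_sup.1 (ih hx)
    obtain ⟨q, hq, j, hj, rfl⟩ := mem_sup.1 (ih hy)
    have hJ' : p * j + i * q + i * j - (q * i + j * p + j * i) ∈ J :=
      sub_mem (add_mem (add_mem (hJ.1 j hj p) (hJ.2 i hi q)) (hJ.2 i hi j))
        (add_mem (add_mem (hJ.1 i hi q) (hJ.2 j hj p)) (hJ.2 j hj i))
    have : (p + i) * (q + j) - (q + j) * (p + i) =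
        (p * q - q * p) + (p * j + i * q + i * j - (q * i + j * p + j * i)) := by noncomm_ring
    rw [this]
    exact add_mem (mem_sup_left (subset_closure ⟨p, hp, q, hq, rfl⟩)) (mem_sup_right hJ')

theorem derSeries_succ_le_of_mul_mem {S J I : AddSubgroup R} {k : ℕ} (hk : derSeries S k ≤ J)
    (hJ : ∀ x ∈ J, ∀ y ∈ J, x * y ∈ I) : derSeries S (k + 1) ≤ I := by
  refine (closure_le _).2 ?_
  rintro _ ⟨a, ha, b, hb, rfl⟩
  exact sub_mem (hJ a (hk ha) b (hk hb)) (hJ b (hk hb) a (hk ha))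

def commutatorIdeal (Z : Set R) : AddSubgroup R :=
  idealSpan {x | ∃ z ∈ Z, ∃ a, x = z * a - a * z}

theorem commutator_mem_commutatorIdeal {Z : Set R} {z : R} (hz : z ∈ Z) (a : R) :
    z * a - a * z ∈ commutatorIdeal Z :=
  subset_idealSpan ⟨z, hz, a, rfl⟩

section CommutatorIdeal

variable {B : AddSubgroup R} (hB : IsLeftIdealSG B) {Z : Set R}

include hB in
theorem idealSpan_le_sup_commutatorIdeal (hZ : Z ⊆ B) : idealSpan Z ≤ B ⊔ commutatorIdeal Z := by
  refine (closure_le _).2 ?_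
  rintro _ ⟨u, z, hz, v, rfl⟩
  have : u * z * v = u * v * z + u * (z * v - v * z) := by noncomm_ring
  rw [this]
  exact add_mem (mem_sup_left (hB z (hZ hz) _))
    (mem_sup_right ((isIdealSG_idealSpan _).1 _ (commutator_mem_commutatorIdeal hz v) u))

variable {I : AddSubgroup R} (hI : IsIdealSG I) (hZI : ∀ z ∈ Z, ∀ b ∈ B, z * b - b * z ∈ I)
include hB hI hZI

theorem commutator_mul_mem {z b : R} (hz : z ∈ Z) (a : R) (hb : b ∈ B) :
    (z * a - a * z) * b ∈ I := by
  have : (z * a - a * z) * b = (z * (a * b) - a * b * z) - a * (z * b - b * z) := by noncomm_ring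
  rw [this]
  exact sub_mem (hZI z hz _ (hB b hb a)) (hI.1 _ (hZI z hz b hb) a)

theorem commutator_mul_commutator_mem (hZ : Z ⊆ B) {z z' : R} (hz : z ∈ Z) (hz' : z' ∈ Z)
    (a c : R) : (z * a - a * z) * (z' * c - c * z') ∈ I := by
  have : (z * a - a * z) * (z' * c - c * z') =
      (z * a - a * z) * z' * c - (z * a - a * z) * (c * z') := by noncomm_ring
  rw [this]
  exact sub_mem (hI.2 _ (commutator_mul_mem hB hI hZI hz a (hZ hz')) c)
    (commutator_mul_mem hB hI hZI hz a (hB z' (hZ hz') c))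

theorem commutator_mul_mul_commutator_mem (hZ : Z ⊆ B) {z z' : R} (hz : z ∈ Z) (hz' : z' ∈ Z)
    (a w c : R) : (z * a - a * z) * w * (z' * c - c * z') ∈ I := by
  have : (z * a - a * z) * w * (z' * c - c * z') =
      (z * (a * w) - a * w * z) * (z' * c - c * z') -
        a * ((z * w - w * z) * (z' * c - c * z')) := by noncomm_ring
  rw [this]
  exact sub_mem (commutator_mul_commutator_mem hB hI hZI hZ hz hz' _ c)
    (hI.1 _ (commutator_mul_commutator_mem hB hI hZI hZ hz hz' w c) a)

theorem mul_mem_of_mem_commutatorIdeal (hZ : Z ⊆ B) {x y : R} (hx : x ∈ commutatorIdeal Z)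
    (hy : y ∈ commutatorIdeal Z) : x * y ∈ I := by
  refine mul_mem_of_mem_closure hx hy ?_
  rintro _ ⟨u, _, ⟨z, hz, a, rfl⟩, v, rfl⟩ _ ⟨u', _, ⟨z', hz', c, rfl⟩, v', rfl⟩
  have : u * (z * a - a * z) * v * (u' * (z' * c - c * z') * v') =
      u * ((z * a - a * z) * (v * u') * (z' * c - c * z')) * v' := by noncomm_ring
  rw [this]
  exact hI.2 _ (hI.1 _ (commutator_mul_mul_commutator_mem hB hI hZI hZ hz hz' a _ c) u) v'

end CommutatorIdeal

section LeftIdeal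

variable {A B : AddSubgroup R} (hB : IsLeftIdealSG B)
include hB

theorem IsLeftIdealSG.commutator_mem {a b : R} (ha : a ∈ B) (hb : b ∈ B) : a * b - b * a ∈ B :=
  sub_mem (hB b hb a) (hB a ha b)

theorem derSeries_le_idealSpan_lowerCentral_succ {T : AddSubgroup R} {k n : ℕ}
    (hBn : derSeries B n = ⊥) (hT : T ≤ idealSpan (lowerCentral B k)) :
    derSeries T (n + 1) ≤ idealSpan (lowerCentral B (k + 1)) := by
  set Z : Set R := (lowerCentral B k : Set R)
  set I := idealSpan (lowerCentral B (k + 1) : Set R)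
  have hI : IsIdealSG I := isIdealSG_idealSpan _
  have hZ : Z ⊆ B := lowerCentral_le (fun _ ha _ hb => hB.commutator_mem ha hb) k
  have hZI : ∀ z ∈ Z, ∀ b ∈ B, z * b - b * z ∈ I := fun z hz b hb =>
    subset_idealSpan (commutator_mem_lowerCentral_succ hz hb)
  have hKI : IsIdealSG (commutatorIdeal Z ⊔ I) := (isIdealSG_idealSpan _).sup hI
  have hTn : derSeries T n ≤ commutatorIdeal Z ⊔ I :=
    calc derSeries T n
        ≤ derSeries (B ⊔ (commutatorIdeal Z ⊔ I)) n :=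
          derSeries_mono (hT.trans ((idealSpan_le_sup_commutatorIdeal hB hZ).trans
            (sup_le_sup_left le_sup_left B))) n
      _ ≤ derSeries B n ⊔ (commutatorIdeal Z ⊔ I) := derSeries_sup_le B hKI n
      _ = commutatorIdeal Z ⊔ I := by rw [hBn, bot_sup_eq]
  refine derSeries_succ_le_of_mul_mem hTn fun x hx y hy => ?_
  obtain ⟨c, hc, i, hi, rfl⟩ := mem_sup.1 hx
  obtain ⟨c', hc', i', hi', rfl⟩ := mem_sup.1 hy
  rw [add_mul, mul_add]
  exact add_mem (add_mem (mul_mem_of_mem_commutatorIdeal hB hI hZI hZ hc hc') (hI.1 i' hi' c))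
    (hI.2 i hi _)

theorem derSeries_top_eq_bot_of_isLeftIdealSG {m n : ℕ} (hA : derSeries A m = ⊥)
    (hBn : LieNilpotentClassLe (B : Set R) n) (hsum : A ⊔ B = ⊤) :
    derSeries (⊤ : AddSubgroup R) (m + n * (n + 1)) = ⊥ := by
  have hBsolv : derSeries B n = ⊥ :=
    derSeries_eq_bot_of_lieNilpotentClassLe (fun _ ha _ hb => hB.commutator_mem ha hb) hBn
  have hbase : derSeries (⊤ : AddSubgroup R) m ≤ idealSpan (lowerCentral B 0) :=
    calc derSeries (⊤ : AddSubgroup R) m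
        ≤ derSeries (A ⊔ idealSpan B) m :=
          derSeries_mono (hsum ▸ sup_le_sup_left (fun _ hb => subset_idealSpan hb) A) m
      _ ≤ derSeries A m ⊔ idealSpan B := derSeries_sup_le A (isIdealSG_idealSpan _) m
      _ = idealSpan (lowerCentral B 0) := by rw [hA, bot_sup_eq]; rfl
  have hdescent : ∀ k,
      derSeries (⊤ : AddSubgroup R) (m + k * (n + 1)) ≤ idealSpan (lowerCentral B k) := by
    intro k
    induction k with
    | zero => simpa using hbase
    | succ k ih =>
      rw [add_one_mul, ← add_assoc, derSeries_add]
      exact derSeries_le_idealSpan_lowerCentral_succ hB hBsolv ih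
  have := hdescent n
  rwa [lowerCentral_eq_bot hBn, coe_bot, idealSpan_zero, le_bot_iff] at this

end LeftIdeal

def AddSubgroup.mop (S : AddSubgroup R) : AddSubgroup Rᵐᵒᵖ :=
  S.comap (MulOpposite.opAddEquiv : R ≃+ Rᵐᵒᵖ).symm.toAddMonoidHom

@[simp]
theorem AddSubgroup.mem_mop {S : AddSubgroup R} {x : Rᵐᵒᵖ} : x ∈ S.mop ↔ x.unop ∈ S :=
  Iff.rfl

theorem AddSubgroup.mop_sup (S T : AddSubgroup R) : (S ⊔ T).mop = S.mop ⊔ T.mop :=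
  (comap_sup_eq _ S T (MulOpposite.opAddEquiv : R ≃+ Rᵐᵒᵖ).symm.surjective).symm

theorem AddSubgroup.mop_top : (⊤ : AddSubgroup R).mop = ⊤ :=
  comap_top _

theorem AddSubgroup.mop_eq_bot {S : AddSubgroup R} : S.mop = ⊥ ↔ S = ⊥ := by
  simp only [eq_bot_iff_forall, mem_mop, MulOpposite.forall, MulOpposite.unop_op,
    MulOpposite.op_eq_zero_iff]

theorem derSeries_mop (S : AddSubgroup R) (k : ℕ) : derSeries S.mop k = (derSeries S k).mop := by
  induction k with
  | zero => rfl
  | succ k ih =>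
    simp only [derSeries, ih]
    refine le_antisymm ((closure_le _).2 ?_) fun x hx => ?_
    · rintro _ ⟨a, ha, b, hb, rfl⟩
      rw [SetLike.mem_coe, mem_mop, MulOpposite.unop_sub, MulOpposite.unop_mul,
        MulOpposite.unop_mul]
      exact subset_closure ⟨b.unop, hb, a.unop, ha, rfl⟩
    · rw [mem_mop] at hx
      rw [← MulOpposite.op_unop x]
      generalize x.unop = y at hx ⊢
      induction hx using closure_induction with
      | mem _ hy =>
        obtain ⟨a, ha, b, hb, rfl⟩ := hy
        exact subset_closure ⟨MulOpposite.op b, hb, MulOpposite.op a, ha, by simp⟩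
      | zero => simp
      | add y z _ _ hy hz => simpa using add_mem hy hz
      | neg y _ hy => simpa using neg_mem hy

theorem unop_itComm (t : ℕ → Rᵐᵒᵖ) (n : ℕ) :
    (itComm t n).unop = (-1 : ℤ) ^ n • itComm (fun i => (t i).unop) n := by
  induction n with
  | zero => simp [itComm]
  | succ n ih =>
    simp only [itComm, MulOpposite.unop_sub, MulOpposite.unop_mul, ih, pow_succ]
    simp only [smul_mul_assoc, mul_smul_comm, mul_neg_one, neg_smul, smul_sub]
    abel

theorem LieNilpotentClassLe.mop {S : AddSubgroup R} {c : ℕ}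
    (h : LieNilpotentClassLe (S : Set R) c) : LieNilpotentClassLe (S.mop : Set Rᵐᵒᵖ) c := by
  intro t ht
  apply MulOpposite.unop_injective
  rw [unop_itComm, h (fun i => (t i).unop) ht, smul_zero, MulOpposite.unop_zero]

theorem IsRightIdealSG.mop {S : AddSubgroup R} (h : IsRightIdealSG S) : IsLeftIdealSG S.mop :=
  fun _ hi r => h _ hi r.unop

theorem derSeries_top_eq_bot_of_isRightIdealSG {A B : AddSubgroup R} {m n : ℕ}
    (hA : derSeries A m = ⊥) (hB : IsRightIdealSG B) (hBn : LieNilpotentClassLe (B : Set R) n)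
    (hsum : A ⊔ B = ⊤) : derSeries (⊤ : AddSubgroup R) (m + n * (n + 1)) = ⊥ := by
  have h := derSeries_top_eq_bot_of_isLeftIdealSG hB.mop (A := A.mop)
    (by rw [derSeries_mop, hA, mop_eq_bot]) hBn.mop (by rw [← mop_sup, hsum, mop_top])
  rwa [← mop_top, derSeries_mop, mop_eq_bot] at h

end

/-- **Corollary of Theorem 1.** If `R = A + B` is a sum of Lie nilpotent
subrings `A`, `B` and at least one of them is a one-sided ideal of `R`, then `R` is
Lie solvable. -/
theorem sum_of_lie_nilpotent_is_lie_solvable {R : Type*} [Ring R] (A B : AddSubgroup R)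
    (hAmul : ∀ a ∈ A, ∀ b ∈ A, a * b ∈ A) (hBmul : ∀ a ∈ B, ∀ b ∈ B, a * b ∈ B)
    (hA : ∃ m, LieNilpotentClassLe (A : Set R) m)
    (hB : ∃ m, LieNilpotentClassLe (B : Set R) m)
    (hsum : A ⊔ B = ⊤)
    (hideal : (IsLeftIdealSG A ∨ IsRightIdealSG A) ∨ (IsLeftIdealSG B ∨ IsRightIdealSG B)) :
    ∃ s : ℕ, derSeries (⊤ : AddSubgroup R) s = ⊥ := by
  obtain ⟨m, hAm⟩ := hA
  obtain ⟨n, hBn⟩ := hB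
  have hAsolv : derSeries A m = ⊥ := derSeries_eq_bot_of_lieNilpotentClassLe
    (fun a ha b hb => sub_mem (hAmul a ha b hb) (hAmul b hb a ha)) hAm
  have hBsolv : derSeries B n = ⊥ := derSeries_eq_bot_of_lieNilpotentClassLe
    (fun a ha b hb => sub_mem (hBmul a ha b hb) (hBmul b hb a ha)) hBn
  have hsum' : B ⊔ A = ⊤ := sup_comm A B ▸ hsum
  rcases hideal with (hAideal | hAideal) | (hBideal | hBideal)
  · exact ⟨_, derSeries_top_eq_bot_of_isLeftIdealSG hAideal hBsolv hAm hsum'⟩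
  · exact ⟨_, derSeries_top_eq_bot_of_isRightIdealSG hBsolv hAideal hAm hsum'⟩
  · exact ⟨_, derSeries_top_eq_bot_of_isLeftIdealSG hBideal hAsolv hBn hsum⟩
  · exact ⟨_, derSeries_top_eq_bot_of_isRightIdealSG hAsolv hBideal hBn hsum⟩
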